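/- arXiv:1802.02863 — 3 statements merged into one kernel-verified Lean document; each statement's English description precedes it below -/
import Mathlib

section
/- Fix q ∈ ℂ with q ≠ 0 and q ≠ ±1, let n ≥ 1 and fix i ∈ {1,…,n}. If D is a twisted derivation of the polynomial algebra ℂ[x_1,…,x_n] relative to the automorphism γ_{q,x_i}, then D(x_j) = 0 for every j ∈ {1,…,n} with j ≠ i. -/
noncomputable section

open MvPolynomial

/-- The `q`-number `[s]_q = (q^s - q^{-s})/(q - q^{-1})`. -/
def qnum (q : ℂ) (s : ℕ) : ℂ := (q ^ s - q⁻¹ ^ s) / (q - q⁻¹)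

/-- The `ℂ`-algebra endomorphism `γ_{q,x_i}` of `ℂ[x_1,…,x_n]` determined by
`x_i ↦ q·x_i` and `x_j ↦ x_j` for `j ≠ i`.  For `q ≠ 0` it is an automorphism,
with inverse `qGamma q⁻¹ i`. -/
def qGamma (q : ℂ) {n : ℕ} (i : Fin n) :
    MvPolynomial (Fin n) ℂ →ₐ[ℂ] MvPolynomial (Fin n) ℂ :=
  aeval (fun j => if j = i then C q * X i else X j)

/-- if `D` is a twisted derivation of `ℂ[x_1,…,x_n]` relative to
`γ_{q,x_i}`, then `D(x_j) = 0` for all `j ≠ i`. -/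
theorem stmt4 (q : ℂ) (hq0 : q ≠ 0) (hq1 : q ≠ 1) (hqm1 : q ≠ -1)
    (n : ℕ) (i : Fin n)
    (D : MvPolynomial (Fin n) ℂ →ₗ[ℂ] MvPolynomial (Fin n) ℂ)
    (hD : ∀ a b : MvPolynomial (Fin n) ℂ,
      D (a * b) = D a * qGamma q i b + qGamma q⁻¹ i a * D b) :
    ∀ j : Fin n, j ≠ i → D (X j) = 0 := by
  intro j hj
  have h1 := hD (X i) (X j)
  have h2 := hD (X j) (X i)
  rw [mul_comm (X j) (X i), h1] at h2
  simp only [qGamma, aeval_X, if_pos rfl, if_neg hj, eq_self_iff_true, if_true] at h2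
  have key : (C q - C q⁻¹ : MvPolynomial (Fin n) ℂ) * (X i * D (X j)) = 0 := by
    linear_combination -h2
  have hqq : q ≠ q⁻¹ := by
    intro h
    have h2 : q * q = 1 := by
      nth_rewrite 2 [h]
      exact mul_inv_cancel₀ hq0
    rcases mul_self_eq_one_iff.mp h2 with h | h
    · exact hq1 h
    · exact hqm1 h
  have hC : (C q - C q⁻¹ : MvPolynomial (Fin n) ℂ) ≠ 0 := by
    rw [sub_ne_zero]
    exact fun h => hqq (C_injective _ _ h)
  rcases mul_eq_zero.mp key with h | h
  · exact absurd h hC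
  rcases mul_eq_zero.mp h with h | h
  · exact absurd h (X_ne_zero i)
  · exact h
end
end

section
/- Fix q ∈ ℂ with q ≠ 0 and q ≠ ±1, let n ≥ 1 and fix i ∈ {1,…,n}. If D is a twisted derivation of ℂ[x_1,…,x_n] relative to γ_{q,x_i}, then D = f_i · ∂_{q,x_i} where f_i = D(x_i); that is, D(p) = D(x_i) · ∂_{q,x_i}(p) for every polynomial p. -/
noncomputable section

open MvPolynomial

/-- The `q`-derivative `∂_{q,x_i}`: the `ℂ`-linear map sending the monomial `x^α` to
`[α_i]_q · x^{α - e_i}` (which is `0` when `α_i = 0`, since `[0]_q = 0`). -/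
def qDeriv (q : ℂ) {n : ℕ} (i : Fin n) (p : MvPolynomial (Fin n) ℂ) :
    MvPolynomial (Fin n) ℂ :=
  ∑ α ∈ p.support, monomial (α - Finsupp.single i 1) (qnum q (α i) * coeff α p)

/-!
Commuting `x_i` past `x_j` (`j ≠ i`) in the twisted Leibniz rule gives
`(q - q⁻¹) x_i D(x_j) = 0`, so `D` kills every `x_j` with `j ≠ i`, as well as the constants.
Hence `D` is determined by `D(x_i)` through the recursion `D(p x_i) = q D(p) x_i + γ⁻¹(p) D(x_i)`,
and `∂_{q,x_i}` obeys the same recursion because `[s+1]_q = q [s]_q + q^{-s}`.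
-/

theorem sub_inv_ne_zero {K : Type*} [Field K] {q : K} (hq0 : q ≠ 0) (hq1 : q ≠ 1)
    (hqm1 : q ≠ -1) : q - q⁻¹ ≠ 0 := by
  intro h
  have hsq : q * q = 1 := by nth_rewrite 2 [sub_eq_zero.mp h]; exact mul_inv_cancel₀ hq0
  rcases mul_self_eq_one_iff.mp hsq with h1 | h1
  exacts [hq1 h1, hqm1 h1]

def IsTwistedDerivation {R A : Type*} [CommSemiring R] [Ring A] [Algebra R A]
    (σ τ : A →ₐ[R] A) (D : A →ₗ[R] A) : Prop :=
  ∀ a b, D (a * b) = D a * σ b + τ a * D b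

namespace IsTwistedDerivation

variable {R A : Type*} [CommSemiring R]

section Ring

variable [Ring A] [Algebra R A] {σ τ : A →ₐ[R] A} {D : A →ₗ[R] A}

theorem map_one_eq_zero (hD : IsTwistedDerivation σ τ D) : D 1 = 0 := by
  simpa using hD 1 1

theorem map_algebraMap (hD : IsTwistedDerivation σ τ D) (c : R) : D (algebraMap R A c) = 0 := by
  rw [Algebra.algebraMap_eq_smul_one, map_smul, hD.map_one_eq_zero, smul_zero]

end Ring

variable [CommRing A] [IsDomain A] [Algebra R A] {σ τ : A →ₐ[R] A} {D : A →ₗ[R] A}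

theorem map_eq_zero_of_fixed (hD : IsTwistedDerivation σ τ D) {a b : A} (hσb : σ b = b)
    (hτb : τ b = b) (ha : σ a ≠ τ a) : D b = 0 := by
  have hab := hD a b
  rw [mul_comm a b, hD b a, hσb, hτb] at hab
  have : (σ a - τ a) * D b = 0 := by linear_combination hab
  exact (mul_eq_zero.mp this).resolve_left (sub_ne_zero.mpr ha)

end IsTwistedDerivation

section qnum

variable {q : ℂ}

theorem qnum_zero : qnum q 0 = 0 := by simp [qnum]

theorem qnum_one (hq : q - q⁻¹ ≠ 0) : qnum q 1 = 1 := by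
  simp [qnum, div_self hq]

theorem qnum_succ (hq : q - q⁻¹ ≠ 0) (s : ℕ) : qnum q (s + 1) = q * qnum q s + q⁻¹ ^ s := by
  rw [qnum, qnum, div_eq_iff hq, add_mul, mul_assoc, div_mul_cancel₀ _ hq]
  ring

end qnum

variable {n : ℕ}

theorem qGamma_X_self (q : ℂ) (i : Fin n) : qGamma q i (X i) = C q * X i := by
  simp [qGamma]

theorem qGamma_X_of_ne (q : ℂ) {i j : Fin n} (h : j ≠ i) : qGamma q i (X j) = X j := by
  simp [qGamma, h]

theorem qGamma_monomial (q : ℂ) (i : Fin n) (α : Fin n →₀ ℕ) (c : ℂ) :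
    qGamma q i (monomial α c) = monomial α (q ^ α i * c) := by
  induction α using Finsupp.induction_linear generalizing c with
  | zero => simp [← C_apply]
  | add α β hα hβ =>
    rw [← mul_one c, ← monomial_mul, map_mul, hα, hβ, monomial_mul, Finsupp.add_apply, pow_add]
    ring_nf
  | single j k =>
    rw [← mul_one c, ← C_mul_monomial, ← X_pow_eq_monomial, map_mul, map_pow, ← algebraMap_eq,
      AlgHom.commutes]
    rcases eq_or_ne j i with rfl | hj
    · rw [qGamma_X_self, mul_pow, ← C_pow, X_pow_eq_monomial, algebraMap_eq, C_mul_monomial,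
        C_mul_monomial, Finsupp.single_eq_same]
      ring_nf
    · rw [qGamma_X_of_ne q hj, X_pow_eq_monomial, algebraMap_eq, C_mul_monomial,
        Finsupp.single_eq_of_ne' hj]
      ring_nf

theorem qDeriv_eq_sum_of_support_subset (q : ℂ) (i : Fin n) {p : MvPolynomial (Fin n) ℂ}
    {s : Finset (Fin n →₀ ℕ)} (h : p.support ⊆ s) :
    qDeriv q i p = ∑ α ∈ s, monomial (α - Finsupp.single i 1) (qnum q (α i) * coeff α p) :=
  Finset.sum_subset h fun α _ hα => by rw [notMem_support_iff.mp hα, mul_zero, map_zero]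

theorem qDeriv_add (q : ℂ) (i : Fin n) (p r : MvPolynomial (Fin n) ℂ) :
    qDeriv q i (p + r) = qDeriv q i p + qDeriv q i r := by
  classical
  have hp : p.support ⊆ p.support ∪ r.support := Finset.subset_union_left
  have hr : r.support ⊆ p.support ∪ r.support := Finset.subset_union_right
  rw [qDeriv_eq_sum_of_support_subset q i support_add,
    qDeriv_eq_sum_of_support_subset q i hp, qDeriv_eq_sum_of_support_subset q i hr,
    ← Finset.sum_add_distrib]
  simp only [coeff_add, mul_add, map_add]

theorem qDeriv_monomial (q : ℂ) (i : Fin n) (α : Fin n →₀ ℕ) (c : ℂ) :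
    qDeriv q i (monomial α c) = monomial (α - Finsupp.single i 1) (qnum q (α i) * c) := by
  classical
  rw [qDeriv_eq_sum_of_support_subset q i support_monomial_subset, Finset.sum_singleton,
    coeff_monomial, if_pos rfl]

theorem qDeriv_C (q : ℂ) (i : Fin n) (c : ℂ) : qDeriv q i (C c) = 0 := by
  rw [C_apply, qDeriv_monomial, Finsupp.zero_apply, qnum_zero, zero_mul, map_zero]

theorem qDeriv_mul_X_of_ne (q : ℂ) {i j : Fin n} (hj : j ≠ i) (p : MvPolynomial (Fin n) ℂ) :
    qDeriv q i (p * X j) = qDeriv q i p * X j := by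
  induction p using induction_on' with
  | monomial α c =>
    have hα : α + Finsupp.single j 1 - Finsupp.single i 1
        = α - Finsupp.single i 1 + Finsupp.single j 1 := by
      ext k
      simp only [Finsupp.add_apply, Finsupp.tsub_apply, Finsupp.single_apply]
      split_ifs <;> omega
    rw [← pow_one (X j), ← monomial_add_single, qDeriv_monomial, qDeriv_monomial, hα,
      monomial_add_single, Finsupp.add_apply, Finsupp.single_eq_of_ne' hj, add_zero]
  | add p r hp hr =>
    rw [add_mul, qDeriv_add, qDeriv_add, hp, hr, add_mul]

theorem qDeriv_mul_X_self {q : ℂ} (hq : q - q⁻¹ ≠ 0) (i : Fin n) (p : MvPolynomial (Fin n) ℂ) :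
    qDeriv q i (p * X i) = C q * qDeriv q i p * X i + qGamma q⁻¹ i p := by
  induction p using induction_on' with
  | monomial α c =>
    rw [← pow_one (X i), ← monomial_add_single, qDeriv_monomial, qDeriv_monomial,
      qGamma_monomial, Finsupp.add_apply, Finsupp.single_eq_same, add_tsub_cancel_right]
    rcases eq_or_ne (α i) 0 with h0 | h0
    · simp [h0, qnum_zero, qnum_one hq]
    · have hα : α - Finsupp.single i 1 + Finsupp.single i 1 = α :=
        tsub_add_cancel_of_le (Finsupp.single_le_iff.mpr (Nat.one_le_iff_ne_zero.mpr h0))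
      rw [C_mul_monomial, ← monomial_add_single, hα, ← map_add, qnum_succ hq]
      ring_nf
  | add p r hp hr =>
    rw [add_mul, qDeriv_add, qDeriv_add, hp, hr, map_add]
    ring

/-- if `D` is a twisted derivation of `ℂ[x_1,…,x_n]` relative to
`γ_{q,x_i}`, then `D = D(x_i) · ∂_{q,x_i}`. -/
theorem stmt5 (q : ℂ) (hq0 : q ≠ 0) (hq1 : q ≠ 1) (hqm1 : q ≠ -1)
    (n : ℕ) (i : Fin n)
    (D : MvPolynomial (Fin n) ℂ →ₗ[ℂ] MvPolynomial (Fin n) ℂ)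
    (hD : ∀ a b : MvPolynomial (Fin n) ℂ,
      D (a * b) = D a * qGamma q i b + qGamma q⁻¹ i a * D b) :
    ∀ p : MvPolynomial (Fin n) ℂ, D p = D (X i) * qDeriv q i p := by
  have hq : q - q⁻¹ ≠ 0 := sub_inv_ne_zero hq0 hq1 hqm1
  have hTw : IsTwistedDerivation (qGamma q i) (qGamma q⁻¹ i) D := hD
  have hDX : ∀ j ≠ i, D (X j) = 0 := fun j hj =>
    hTw.map_eq_zero_of_fixed (a := X i) (qGamma_X_of_ne q hj) (qGamma_X_of_ne q⁻¹ hj) <| by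
      rw [qGamma_X_self, qGamma_X_self, Ne, mul_left_inj' (X_ne_zero i), C_inj, ← sub_eq_zero]
      exact hq
  intro p
  induction p using induction_on with
  | C c => rw [← algebraMap_eq, hTw.map_algebraMap, algebraMap_eq, qDeriv_C, mul_zero]
  | add p r hp hr => rw [map_add, hp, hr, qDeriv_add, mul_add]
  | mul_X p j hp =>
    rcases eq_or_ne j i with rfl | hj
    · rw [hD, qGamma_X_self, qDeriv_mul_X_self hq, hp]
      ring
    · rw [hD, qGamma_X_of_ne q hj, hDX j hj, qDeriv_mul_X_of_ne q hj, hp]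
      ring
end
end

section
/- In U_q(sl_n(ℂ)), for all 1 ≤ i < k < j ≤ n the recursively defined root vectors satisfy E_{i,j} = E_{i,k}E_{k,j} − q·E_{k,j}E_{i,k} and E_{j,i} = E_{j,k}E_{k,i} − q^{-1}·E_{k,i}E_{j,k}; in particular the right-hand sides are independent of the choice of intermediate index k. -/
noncomputable section

/-- The Cartan matrix of `sl_n`: `a_{ii} = 2`, `a_{ij} = -1` if `|i-j| = 1`, else `0`. -/
def cartan (i j : ℕ) : ℤ := if i = j then 2 else if i + 1 = j ∨ j + 1 = i then -1 else 0

variable {U : Type*} [Ring U] [Algebra ℂ U]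

/-- Auxiliary: `EupAux q e i g = E_{i,i+1+g}`, the raising root vectors indexed by
the gap `g`, built from the generators `e` by
`E_{i,i+1} = e_i`, `E_{i,j} = E_{i,j-1}E_{j-1,j} − q·E_{j-1,j}E_{i,j-1}`. -/
def EupAux (q : ℂ) (e : ℕ → U) (i : ℕ) : ℕ → U
  | 0 => e i
  | g + 1 => EupAux q e i g * e (i + g + 1) - q • (e (i + g + 1) * EupAux q e i g)

/-- The raising root vector `E_{i,j}` (intended for `i < j`). -/
def Eup (q : ℂ) (e : ℕ → U) (i j : ℕ) : U := EupAux q e i (j - i - 1)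

/-- Auxiliary: `EdnAux q f j g = E_{j,j-1-g}`, the lowering root vectors indexed by
the gap `g`, built from the generators `f` by
`E_{i+1,i} = f_i`, `E_{j,i} = E_{j,i+1}E_{i+1,i} − q⁻¹·E_{i+1,i}E_{j,i+1}`. -/
def EdnAux (q : ℂ) (f : ℕ → U) (j : ℕ) : ℕ → U
  | 0 => f (j - 1)
  | g + 1 => EdnAux q f j g * f (j - g - 2) - q⁻¹ • (f (j - g - 2) * EdnAux q f j g)

/-- The lowering root vector `E_{j,i}` (intended for `i < j`). -/
def Edn (q : ℂ) (f : ℕ → U) (j i : ℕ) : U := EdnAux q f j (j - i - 1)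

/-- `K_{i,j} = k_i k_{i+1} ⋯ k_{j-1}`. -/
def Kprod (k : ℕ → U) (i j : ℕ) : U := ((List.range' i (j - i)).map k).prod

/-!
Writing `[a, b]_q = ab − q·ba`, the q-commutator is associative,
`[[a, b]_q, c]_q = [a, [b, c]_q]_q`, as soon as `a` and `c` commute. Since
`E_{i,j+1} = [E_{i,j}, e_j]_q` and `e_j` commutes with every `e_m`, `m < c ≤ j − 1`, hence with
`E_{i,c}`, induction on `j` gives `E_{i,j} = [E_{i,c}, E_{c,j}]_q`. The lowering vectors
`E_{j,i}` are the raising vectors, for `q⁻¹`, of the reversed sequence `f_{j-1}, f_{j-2}, …`,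
so the second identity is the first one for them.
-/

section QCommutator

variable {R A : Type*} [CommRing R] [Ring A] [Algebra R A]

def qCommutator (q : R) (a b : A) : A := a * b - q • (b * a)

theorem qCommutator_assoc_of_commute (q : R) {a c : A} (b : A) (hac : Commute a c) :
    qCommutator q (qCommutator q a b) c = qCommutator q a (qCommutator q b c) := by
  have hca : ∀ x : A, c * (a * x) = a * (c * x) := fun x => hac.symm.left_comm x
  simp only [qCommutator, mul_sub, sub_mul, smul_sub, smul_mul_assoc, mul_smul_comm,
    mul_assoc, hac.symm.eq, hca]
  abel

end QCommutator

theorem EupAux_eq_EupAux_shift (q : ℂ) (e : ℕ → U) (a g : ℕ) :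
    EupAux q e a g = EupAux q (fun t => e (a + t)) 0 g := by
  induction g with
  | zero => rfl
  | succ g ih => simp only [EupAux, ih, zero_add, add_assoc]

theorem commute_EupAux (q : ℂ) (e : ℕ → U) {x : U} (i g : ℕ)
    (hx : ∀ t ≤ g, Commute x (e (i + t))) : Commute x (EupAux q e i g) := by
  induction g with
  | zero => simpa [EupAux] using hx 0 le_rfl
  | succ g ih =>
    have hlast : Commute x (e (i + g + 1)) := hx (g + 1) le_rfl
    have hprev : Commute x (EupAux q e i g) := ih fun t ht => hx t (by omega)
    exact (hprev.mul_right hlast).sub_right ((hlast.mul_right hprev).smul_right q)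

theorem commute_Eup (q : ℂ) (e : ℕ → U) {x : U} {i j : ℕ} (hij : i < j)
    (hx : ∀ m, i ≤ m → m < j → Commute x (e m)) : Commute x (Eup q e i j) :=
  commute_EupAux q e i _ fun t ht => hx (i + t) (by omega) (by omega)

theorem Eup_self_succ (q : ℂ) (e : ℕ → U) (i : ℕ) : Eup q e i (i + 1) = e i := by
  simp [Eup, EupAux]

theorem Eup_succ (q : ℂ) (e : ℕ → U) {i j : ℕ} (hij : i < j) :
    Eup q e i (j + 1) = qCommutator q (Eup q e i j) (e j) := by
  obtain ⟨g, rfl⟩ : ∃ g, j = i + g + 1 := ⟨j - i - 1, by omega⟩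
  simp only [Eup, qCommutator, show i + g + 1 + 1 - i - 1 = g + 1 by omega,
    show i + g + 1 - i - 1 = g by omega, EupAux]

theorem Eup_eq_qCommutator (q : ℂ) (e : ℕ → U) {i c j : ℕ} (hic : i < c) (hcj : c < j)
    (hfar : ∀ a b, i ≤ a → a + 1 < b → b < j → Commute (e a) (e b)) :
    Eup q e i j = qCommutator q (Eup q e i c) (Eup q e c j) := by
  induction j, hcj using Nat.le_induction with
  | base => rw [Eup_succ q e hic, Eup_self_succ]
  | succ j hcj ih =>
    have hcomm : Commute (Eup q e i c) (e j) :=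
      (commute_Eup q e hic fun m him hmc => (hfar m j him (by omega) (by omega)).symm).symm
    rw [Eup_succ q e (by omega), ih fun a b ha hab hb => hfar a b ha hab (by omega),
      qCommutator_assoc_of_commute q _ hcomm, Eup_succ q e hcj]

theorem EdnAux_eq_EupAux (q : ℂ) (f : ℕ → U) (j g : ℕ) :
    EdnAux q f j g = EupAux q⁻¹ (fun t => f (j - 1 - t)) 0 g := by
  induction g with
  | zero => rfl
  | succ g ih => simp only [EdnAux, EupAux, ih, show j - g - 2 = j - 1 - (0 + g + 1) by omega]

theorem Edn_eq_Eup (q : ℂ) (f : ℕ → U) {i j : ℕ} (a : ℕ) (hij : i < j) (hja : j ≤ a) :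
    Edn q f j i = Eup q⁻¹ (fun t => f (a - 1 - t)) (a - j) (a - i) := by
  rw [Edn, Eup, EdnAux_eq_EupAux, EupAux_eq_EupAux_shift _ _ (a - j),
    show a - i - (a - j) - 1 = j - i - 1 by omega]
  congr 1
  funext t
  congr 1
  omega

theorem Edn_eq_qCommutator (q : ℂ) (f : ℕ → U) {i c j : ℕ} (hic : i < c) (hcj : c < j)
    (hfar : ∀ a b, i ≤ a → a + 1 < b → b < j → Commute (f a) (f b)) :
    Edn q f j i = qCommutator q⁻¹ (Edn q f j c) (Edn q f c i) := by
  rw [Edn_eq_Eup q f j (hic.trans hcj) le_rfl, Edn_eq_Eup q f j hcj le_rfl,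
    Edn_eq_Eup q f j hic hcj.le]
  refine Eup_eq_qCommutator q⁻¹ _ (by omega) (by omega) fun a b ha hab hb => ?_
  exact (hfar (j - 1 - b) (j - 1 - a) (by omega) (by omega) (by omega)).symm

theorem stmt8_general {U : Type*} [Ring U] [Algebra ℂ U]
    (q : ℂ) (n : ℕ) (e f : ℕ → U)
    (heecomm : ∀ i j, 1 ≤ i → i ≤ n - 1 → 1 ≤ j → j ≤ n - 1 → (i + 1 < j ∨ j + 1 < i) →
      e i * e j = e j * e i)
    (hffcomm : ∀ i j, 1 ≤ i → i ≤ n - 1 → 1 ≤ j → j ≤ n - 1 → (i + 1 < j ∨ j + 1 < i) →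
      f i * f j = f j * f i) :
    ∀ i c j : ℕ, 1 ≤ i → i < c → c < j → j ≤ n →
      Eup q e i j = Eup q e i c * Eup q e c j - q • (Eup q e c j * Eup q e i c) ∧
      Edn q f j i = Edn q f j c * Edn q f c i - q⁻¹ • (Edn q f c i * Edn q f j c) := by
  intro i c j hi hic hcj hjn
  exact ⟨Eup_eq_qCommutator q e hic hcj fun a b ha hab hb =>
      heecomm a b (by omega) (by omega) (by omega) (by omega) (Or.inl hab),
    Edn_eq_qCommutator q f hic hcj fun a b ha hab hb =>
      hffcomm a b (by omega) (by omega) (by omega) (by omega) (Or.inl hab)⟩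

/-- in `U_q(sl_n(ℂ))` (formalized universally: in any unital associative
`ℂ`-algebra `U` with elements `e i`, `f i`, `ka i`, `kinv i` (`1 ≤ i ≤ n-1`) satisfying
the defining relations of `U_q(sl_n(ℂ))`), for all `1 ≤ i < c < j ≤ n` the recursively
defined root vectors satisfy `E_{i,j} = E_{i,c}E_{c,j} − q·E_{c,j}E_{i,c}` and
`E_{j,i} = E_{j,c}E_{c,i} − q⁻¹·E_{c,i}E_{j,c}`; in particular the right-hand sides do
not depend on the intermediate index `c`. -/
theorem stmt8 {U : Type*} [Ring U] [Algebra ℂ U]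
    (q : ℂ) (hq0 : q ≠ 0) (hq1 : q ≠ 1) (hqm1 : q ≠ -1)
    (n : ℕ) (hn : 2 ≤ n)
    (e f ka kinv : ℕ → U)
    (hkk : ∀ i, 1 ≤ i → i ≤ n - 1 → ka i * kinv i = 1)
    (hkk' : ∀ i, 1 ≤ i → i ≤ n - 1 → kinv i * ka i = 1)
    (hkcomm : ∀ i j, 1 ≤ i → i ≤ n - 1 → 1 ≤ j → j ≤ n - 1 → ka i * ka j = ka j * ka i)
    (hke : ∀ i j, 1 ≤ i → i ≤ n - 1 → 1 ≤ j → j ≤ n - 1 →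
      ka i * e j * kinv i = (q ^ cartan i j) • e j)
    (hkf : ∀ i j, 1 ≤ i → i ≤ n - 1 → 1 ≤ j → j ≤ n - 1 →
      ka i * f j * kinv i = (q ^ (-cartan i j)) • f j)
    (hef : ∀ i j, 1 ≤ i → i ≤ n - 1 → 1 ≤ j → j ≤ n - 1 →
      e i * f j - f j * e i = if i = j then (q - q⁻¹)⁻¹ • (ka i - kinv i) else 0)
    (hee : ∀ i j, 1 ≤ i → i ≤ n - 1 → 1 ≤ j → j ≤ n - 1 → (i + 1 = j ∨ j + 1 = i) →
      e i ^ 2 * e j - (q + q⁻¹) • (e i * e j * e i) + e j * e i ^ 2 = 0)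
    (hff : ∀ i j, 1 ≤ i → i ≤ n - 1 → 1 ≤ j → j ≤ n - 1 → (i + 1 = j ∨ j + 1 = i) →
      f i ^ 2 * f j - (q + q⁻¹) • (f i * f j * f i) + f j * f i ^ 2 = 0)
    (heecomm : ∀ i j, 1 ≤ i → i ≤ n - 1 → 1 ≤ j → j ≤ n - 1 → (i + 1 < j ∨ j + 1 < i) →
      e i * e j = e j * e i)
    (hffcomm : ∀ i j, 1 ≤ i → i ≤ n - 1 → 1 ≤ j → j ≤ n - 1 → (i + 1 < j ∨ j + 1 < i) →
      f i * f j = f j * f i)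
    :
    ∀ i c j : ℕ, 1 ≤ i → i < c → c < j → j ≤ n →
      Eup q e i j = Eup q e i c * Eup q e c j - q • (Eup q e c j * Eup q e i c) ∧
      Edn q f j i = Edn q f j c * Edn q f c i - q⁻¹ • (Edn q f c i * Edn q f j c) :=
  stmt8_general q n e f heecomm hffcomm
end
end
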